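/- If there exists a point z₀ ∈ U such that (π(|h|²) − |h|²)(z₀) = 0 for every h ∈ C(K) with Ψ(h) = h, then π(|h|²) = |h|² identically on K for every such h. -/

import Mathlib

open MeasureTheory Filter Topology ComplexOrder

/-- `Φ` is a Markov operator on the bounded Borel measurable functions on `U`:
for each `x` there is a Borel probability measure `P x` representing `Φ` at `x`. -/
def IsMarkovOperator {U : Type*} [MeasurableSpace U]
    (Φ : (U → ℂ) → (U → ℂ)) : Prop :=
  ∀ x : U, ∃ P : Measure U, IsProbabilityMeasure P ∧
    ∀ f : U → ℂ, Measurable f → (∃ C : ℝ, ∀ y, ‖f y‖ ≤ C) →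
      Φ f x = ∫ y, f y ∂P

/-- `Φ` has the strong Feller property: it maps bounded Borel measurable
functions to continuous functions. -/
def HasStrongFeller {U : Type*} [MeasurableSpace U] [TopologicalSpace U]
    (Φ : (U → ℂ) → (U → ℂ)) : Prop :=
  ∀ f : U → ℂ, Measurable f → (∃ C : ℝ, ∀ y, ‖f y‖ ≤ C) → Continuous (Φ f)

/-- Boundary condition (A): for each boundary point `x` there is a barrier
`h ∈ C(K)` with `h x = 0`, `h < 0` off `x`, and `Φ (h_U) ≥ h_U` on `U`. -/
def CondA {K : Type*} [TopologicalSpace K] (U : Set K)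
    (Φ : (↥U → ℂ) → (↥U → ℂ)) : Prop :=
  ∀ x ∈ Uᶜ, ∃ h : C(K, ℂ), h x = 0 ∧ (∀ y : K, y ≠ x → h y < 0) ∧
    ∀ u : ↥U, h u.1 ≤ Φ (fun v : ↥U => h v.1) u

/-- Maximum principle (B): every real-valued `g ∈ C(K)` with `Φ (g_U) ≥ g_U`
on `U` attaining its global maximum inside `U` is constant. -/
def CondB {K : Type*} [TopologicalSpace K] (U : Set K)
    (Φ : (↥U → ℂ) → (↥U → ℂ)) : Prop :=
  ∀ g : C(K, ℂ), (∀ x : K, (g x).im = 0) →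
    (∀ u : ↥U, g u.1 ≤ Φ (fun v : ↥U => g v.1) u) →
    (∃ z ∈ U, ∀ x : K, g x ≤ g z) →
    ∀ x y : K, g x = g y

/-- The map `Ψ` : `Ψ f = Φ (f_U)` on `U` and `Ψ f = f` on `∂U = K \ U`. -/
noncomputable def psiFun {K : Type*} (U : Set K)
    (Φ : (↥U → ℂ) → (↥U → ℂ)) (f : K → ℂ) : K → ℂ :=
  open Classical in fun x => if hx : x ∈ U then Φ (fun v : ↥U => f v.1) ⟨x, hx⟩ else f x

/-!
Write `f = |h|²` and `Fₙ = Ψⁿ f`. Each `Ψ(·)(x)` is an average, so `Ψ h = h` and Jensen give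
`f ≤ Ψ f`; hence `Fₙ` increases to `π(f) ≥ f`, with equality on `∂U` where `Ψ` is the identity.
The limit is continuous: on `U` as a uniform limit of the strong Feller functions `Fₙ`, and at a
boundary point `x` because the barrier `b` of (A) gives, for every `ε > 0`, a `Ψ`-superharmonic
majorant `f(x) + ε - C b` of `f`, hence of every `Fₙ`. Passing to the limit under the integrals,
`Ψ π(f) = π(f)`, so `f - π(f)` is continuous, real, `Ψ`-subharmonic and nonpositive. It vanishes
at `z₀ ∈ U`, so by the maximum principle (B) it vanishes identically.
-/

section BoundedMeasurable

variable {α : Type*} [MeasurableSpace α]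

def BoundedMeasurable (f : α → ℂ) : Prop :=
  Measurable f ∧ ∃ C : ℝ, ∀ y, ‖f y‖ ≤ C

lemma BoundedMeasurable.integrable {f : α → ℂ} (hf : BoundedMeasurable f) (μ : Measure α)
    [IsFiniteMeasure μ] : Integrable f μ :=
  let ⟨_, hC⟩ := hf.2
  ⟨hf.1.aestronglyMeasurable, .of_bounded (ae_of_all _ hC)⟩

lemma BoundedMeasurable.sub {f g : α → ℂ} (hf : BoundedMeasurable f)
    (hg : BoundedMeasurable g) : BoundedMeasurable (f - g) :=
  let ⟨C, hC⟩ := hf.2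
  let ⟨D, hD⟩ := hg.2
  ⟨hf.1.sub hg.1, C + D, fun y => (norm_sub_le _ _).trans (add_le_add (hC y) (hD y))⟩

lemma BoundedMeasurable.comp_measurable {β : Type*} [MeasurableSpace β] {f : α → ℂ}
    (hf : BoundedMeasurable f) {u : β → α} (hu : Measurable u) :
    BoundedMeasurable fun y => f (u y) :=
  ⟨hf.1.comp hu, hf.2.imp fun _ hC y => hC (u y)⟩

lemma Continuous.boundedMeasurable [TopologicalSpace α] [CompactSpace α]
    [OpensMeasurableSpace α] {f : α → ℂ} (hf : Continuous f) : BoundedMeasurable f :=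
  ⟨hf.measurable, (isCompact_range hf).isBounded.exists_norm_le.imp
    fun _ hC y => hC _ (Set.mem_range_self y)⟩

lemma BoundedMeasurable.iterate {T : (α → ℂ) → (α → ℂ)}
    (hTb : ∀ f, BoundedMeasurable f → BoundedMeasurable (T f)) {f : α → ℂ}
    (hf : BoundedMeasurable f) (n : ℕ) : BoundedMeasurable (T^[n] f) :=
  Function.Iterate.rec BoundedMeasurable hf hTb n

end BoundedMeasurable

namespace IsMarkovOperator

variable {α : Type*} [MeasurableSpace α] {T : (α → ℂ) → (α → ℂ)}

lemma exists_integral (hT : IsMarkovOperator T) (x : α) :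
    ∃ P : Measure α, IsProbabilityMeasure P ∧
      ∀ f, BoundedMeasurable f → T f x = ∫ y, f y ∂P :=
  let ⟨P, hP, hTP⟩ := hT x
  ⟨P, hP, fun f hf => hTP f hf.1 hf.2⟩

lemma norm_apply_le (hT : IsMarkovOperator T) {f : α → ℂ} (hf : BoundedMeasurable f) {C : ℝ}
    (hC : ∀ y, ‖f y‖ ≤ C) (x : α) : ‖T f x‖ ≤ C := by
  obtain ⟨P, _, hP⟩ := hT.exists_integral x
  simpa [hP f hf] using norm_integral_le_of_norm_le_const (μ := P) (ae_of_all _ hC)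

lemma mono (hT : IsMarkovOperator T) {f g : α → ℂ} (hf : BoundedMeasurable f)
    (hg : BoundedMeasurable g) (hfg : f ≤ g) : T f ≤ T g := fun x => by
  obtain ⟨P, _, hP⟩ := hT.exists_integral x
  rw [hP f hf, hP g hg]
  exact integral_mono (hf.integrable P) (hg.integrable P) hfg

lemma map_sub (hT : IsMarkovOperator T) {f g : α → ℂ} (hf : BoundedMeasurable f)
    (hg : BoundedMeasurable g) : T (f - g) = T f - T g := funext fun x => by
  obtain ⟨P, _, hP⟩ := hT.exists_integral x
  rw [Pi.sub_apply, hP _ (hf.sub hg), hP f hf, hP g hg]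
  exact integral_sub (hf.integrable P) (hg.integrable P)

lemma map_const_sub_mul (hT : IsMarkovOperator T) {f : α → ℂ} (hf : BoundedMeasurable f)
    (c d : ℂ) : T (fun y => c - d * f y) = fun x => c - d * T f x := funext fun x => by
  obtain ⟨P, _, hP⟩ := hT.exists_integral x
  obtain ⟨C, hC⟩ := hf.2
  have hcdf : BoundedMeasurable fun y => c - d * f y :=
    ⟨measurable_const.sub (measurable_const.mul hf.1), ‖c‖ + ‖d‖ * C, fun y =>
      (norm_sub_le _ _).trans (by rw [norm_mul]; gcongr; exact hC y)⟩
  rw [hP _ hcdf, hP f hf, integral_sub (integrable_const c) ((hf.integrable P).const_mul d),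
    integral_const_mul, integral_const, probReal_univ, one_smul]

lemma sq_norm_le_map_sq_norm (hT : IsMarkovOperator T) {f : α → ℂ} (hf : BoundedMeasurable f)
    (x : α) : ((‖T f x‖ ^ 2 : ℝ) : ℂ) ≤ T (fun y => ((‖f y‖ ^ 2 : ℝ) : ℂ)) x := by
  obtain ⟨P, _, hP⟩ := hT.exists_integral x
  obtain ⟨C, hC⟩ := hf.2
  have hsq : BoundedMeasurable fun y => ((‖f y‖ ^ 2 : ℝ) : ℂ) :=
    ⟨(hf.1.norm.pow_const 2).complex_ofReal, C ^ 2, fun y => by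
      rw [Complex.norm_real, Real.norm_of_nonneg (by positivity)]
      exact pow_le_pow_left₀ (norm_nonneg _) (hC y) 2⟩
  have hnorm : Integrable (fun y => ‖f y‖) P := (hf.integrable P).norm
  rw [hP f hf, hP _ hsq, integral_complex_ofReal, Complex.real_le_real]
  calc ‖∫ y, f y ∂P‖ ^ 2 ≤ (∫ y, ‖f y‖ ∂P) ^ 2 := by
        gcongr; exact norm_integral_le_integral_norm f
    _ ≤ ∫ y, ‖f y‖ ^ 2 ∂P :=
        (convexOn_pow 2).map_integral_le (continuousOn_pow 2) isClosed_Ici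
          (ae_of_all _ fun y => norm_nonneg (f y)) hnorm
          (by simpa [Function.comp_def] using (hsq.integrable P).norm)

lemma tendsto_apply_of_tendstoUniformly (hT : IsMarkovOperator T) {F : ℕ → α → ℂ}
    {p : α → ℂ} (hF : ∀ n, BoundedMeasurable (F n)) (hp : BoundedMeasurable p)
    (hFp : TendstoUniformly F p atTop) (x : α) :
    Tendsto (fun n => T (F n) x) atTop (𝓝 (T p x)) := by
  rw [Metric.tendsto_atTop]
  intro ε hε
  obtain ⟨N, hN⟩ := eventually_atTop.1 (Metric.tendstoUniformly_iff.1 hFp (ε / 2) (by positivity))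
  refine ⟨N, fun n hn => ?_⟩
  rw [dist_eq_norm, ← Pi.sub_apply, ← hT.map_sub (hF n) hp]
  calc ‖T (F n - p) x‖ ≤ ε / 2 :=
        hT.norm_apply_le ((hF n).sub hp)
          (fun y => by rw [Pi.sub_apply, ← dist_eq_norm']; exact (hN n hn y).le) x
    _ < ε := half_lt_self hε

lemma le_iterate_of_le_map (hT : IsMarkovOperator T)
    (hTb : ∀ f, BoundedMeasurable f → BoundedMeasurable (T f)) {f : α → ℂ}
    (hf : BoundedMeasurable f) (hfT : f ≤ T f) (n : ℕ) : f ≤ T^[n] f := by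
  induction n with
  | zero => exact le_rfl
  | succ n ih =>
    rw [Function.iterate_succ_apply']
    exact hfT.trans (hT.mono hf (hf.iterate hTb n) ih)

lemma iterate_le_of_map_le (hT : IsMarkovOperator T)
    (hTb : ∀ f, BoundedMeasurable f → BoundedMeasurable (T f)) {f q : α → ℂ}
    (hf : BoundedMeasurable f) (hq : BoundedMeasurable q) (hfq : f ≤ q) (hTq : T q ≤ q)
    (n : ℕ) : T^[n] f ≤ q := by
  induction n with
  | zero => exact hfq
  | succ n ih =>
    rw [Function.iterate_succ_apply']
    exact (hT.mono (hf.iterate hTb n) hq ih).trans hTq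

lemma le_of_tendsto_iterate (hT : IsMarkovOperator T)
    (hTb : ∀ f, BoundedMeasurable f → BoundedMeasurable (T f)) {f p : α → ℂ}
    (hf : BoundedMeasurable f) (hfT : f ≤ T f)
    (hfp : ∀ y, Tendsto (fun n => T^[n] f y) atTop (𝓝 (p y))) : f ≤ p := fun y =>
  ge_of_tendsto' (hfp y) fun n => hT.le_iterate_of_le_map hTb hf hfT n y

lemma map_eq_of_tendstoUniformly_iterate (hT : IsMarkovOperator T)
    (hTb : ∀ f, BoundedMeasurable f → BoundedMeasurable (T f)) {f p : α → ℂ}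
    (hf : BoundedMeasurable f) (hp : BoundedMeasurable p)
    (hfp : TendstoUniformly (fun n => T^[n] f) p atTop) : T p = p := funext fun x => by
  have hTfp := hT.tendsto_apply_of_tendstoUniformly (hf.iterate hTb) hp hfp x
  simp_rw [← Function.iterate_succ_apply' T] at hTfp
  exact tendsto_nhds_unique hTfp ((hfp.tendsto_at x).comp (tendsto_add_atTop_nat 1))

end IsMarkovOperator

section Barrier

variable {X : Type*} [TopologicalSpace X]

lemma exists_le_add_sub_mul_of_barrier [CompactSpace X] {g b : X → ℝ} {x : X}
    (hg : Continuous g) (hb : Continuous b) (hbx : b x = 0) (hb_neg : ∀ y ≠ x, b y < 0)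
    {ε : ℝ} (hε : 0 < ε) : ∃ C : ℝ, 0 ≤ C ∧ ∀ y, g y ≤ g x + ε - C * b y := by
  set S := {y | g x + ε ≤ g y}
  have hS : IsCompact S := (isClosed_le continuous_const hg).isCompact
  have hb_negS : ∀ y ∈ S, b y < 0 := fun y hy =>
    hb_neg y fun hyx => by
      rw [hyx] at hy; linarith [show g x + ε ≤ g x from hy]
  obtain ⟨C, hC⟩ := hS.bddAbove_image (f := fun y => (g y - (g x + ε)) / -b y)
    ((hg.continuousOn.sub continuousOn_const).div hb.continuousOn.neg
      fun y hy => (neg_pos.2 (hb_negS y hy)).ne')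
  refine ⟨max C 0, le_max_right _ _, fun y => ?_⟩
  by_cases hy : y ∈ S
  · have hby := neg_pos.2 (hb_negS y hy)
    have := (div_le_iff₀ hby).1 (hC ⟨y, hy, rfl⟩)
    nlinarith [le_max_left C 0]
  · have hby : b y ≤ 0 := by
      rcases eq_or_ne y x with rfl | hyx
      · exact hbx.le
      · exact (hb_neg y hyx).le
    have hgy : g y < g x + ε := not_le.1 hy
    nlinarith [le_max_right C 0]

lemma continuousAt_of_le_of_forall_le_add {g p : X → ℝ} {x : X} (hg : ContinuousAt g x)
    (hgp : g ≤ p) (hpx : p x = g x)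
    (hq : ∀ ε > 0, ∃ q : X → ℝ, ContinuousAt q x ∧ q x ≤ g x + ε ∧ p ≤ q) :
    ContinuousAt p x := by
  rw [continuousAt_iff_lower_upperSemicontinuousAt]
  constructor
  · intro c hc
    rw [hpx] at hc
    filter_upwards [hg.eventually (lt_mem_nhds hc)] with y hy using hy.trans_le (hgp y)
  · intro c hc
    rw [hpx] at hc
    obtain ⟨q, hq, hqx, hpq⟩ := hq ((c - g x) / 2) (by linarith)
    filter_upwards [hq.eventually (gt_mem_nhds (show q x < c by linarith))] with y hy
      using (hpq y).trans_lt hy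

end Barrier

lemma IsMarkovOperator.continuousAt_of_tendsto_iterate {α : Type*} [TopologicalSpace α]
    [CompactSpace α] [MeasurableSpace α] [OpensMeasurableSpace α] {T : (α → ℂ) → (α → ℂ)}
    (hT : IsMarkovOperator T) (hTb : ∀ f, BoundedMeasurable f → BoundedMeasurable (T f))
    {g : α → ℝ} (hg : Continuous g) (hgT : (fun y => (g y : ℂ)) ≤ T fun y => (g y : ℂ))
    {p : α → ℂ} (hp : ∀ y, Tendsto (fun n => T^[n] (fun y => (g y : ℂ)) y) atTop (𝓝 (p y)))
    {x : α} (hpx : p x = g x) {b : α → ℝ} (hb : Continuous b) (hbx : b x = 0)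
    (hb_neg : ∀ y ≠ x, b y < 0) (hbT : (fun y => (b y : ℂ)) ≤ T fun y => (b y : ℂ)) :
    ContinuousAt p x := by
  have hgb : BoundedMeasurable fun y => (g y : ℂ) :=
    (Complex.continuous_ofReal.comp hg).boundedMeasurable
  have hgp : (fun y => (g y : ℂ)) ≤ p := hT.le_of_tendsto_iterate hTb hgb hgT hp
  -- In `ComplexOrder`, `z ≤ w` forces `z.im = w.im`, so `p` is real.
  have hp_re : (fun y => ((p y).re : ℂ)) = p := funext fun y =>
    Complex.ext rfl (by simpa using (Complex.le_def.1 (hgp y)).2)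
  have hq : ∀ ε > 0, ∃ q : α → ℝ, ContinuousAt q x ∧ q x ≤ g x + ε ∧ (fun y => (p y).re) ≤ q := by
    intro ε hε
    obtain ⟨C, hC, hgC⟩ := exists_le_add_sub_mul_of_barrier hg hb hbx hb_neg hε
    let Q : α → ℂ := fun y => ((g x + ε : ℝ) : ℂ) - C * b y
    have hQ : BoundedMeasurable Q := (by fun_prop : Continuous Q).boundedMeasurable
    have hTQ : T Q ≤ Q := by
      change (T fun y => ((g x + ε : ℝ) : ℂ) - C * b y) ≤ Q
      rw [hT.map_const_sub_mul (f := fun y => (b y : ℂ))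
        (Complex.continuous_ofReal.comp hb).boundedMeasurable]
      exact fun y =>
        sub_le_sub_left (mul_le_mul_of_nonneg_left (hbT y) (Complex.zero_le_real.2 hC)) _
    refine ⟨fun y => g x + ε - C * b y, by fun_prop, by simp [hbx], fun y => ?_⟩
    have hpQ := le_of_tendsto' (hp y) fun n =>
      hT.iterate_le_of_map_le hTb hgb hQ (fun y => by simp only [Q]; exact_mod_cast hgC y) hTQ n y
    simpa [Q] using (Complex.le_def.1 hpQ).1
  have hpx_re : (p x).re = g x := by simp [hpx]
  rw [← hp_re]
  exact Complex.continuous_ofReal.continuousAt.comp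
    (continuousAt_of_le_of_forall_le_add hg.continuousAt
      (fun y => by simpa using (Complex.le_def.1 (hgp y)).1) hpx_re hq)

section Psi

variable {K : Type*} {U : Set K} {Φ : (↥U → ℂ) → (↥U → ℂ)}

lemma psiFun_of_mem {f : K → ℂ} {x : K} (hx : x ∈ U) :
    psiFun U Φ f x = Φ (fun v : ↥U => f v.1) ⟨x, hx⟩ := dif_pos hx

lemma psiFun_of_notMem {f : K → ℂ} {x : K} (hx : x ∉ U) : psiFun U Φ f x = f x := dif_neg hx

lemma iterate_psiFun_of_notMem {f : K → ℂ} {x : K} (hx : x ∉ U) (n : ℕ) :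
    (psiFun U Φ)^[n] f x = f x := by
  induction n with
  | zero => rfl
  | succ n ih => rw [Function.iterate_succ_apply', psiFun_of_notMem hx, ih]

lemma CondA.exists_barrier [TopologicalSpace K] (hA : CondA U Φ) {x : K} (hx : x ∉ U) :
    ∃ b : K → ℝ, Continuous b ∧ b x = 0 ∧ (∀ y ≠ x, b y < 0) ∧
      (fun y => (b y : ℂ)) ≤ psiFun U Φ fun y => (b y : ℂ) := by
  obtain ⟨h, hhx, hh_neg, hhΦ⟩ := hA x hx
  have hh_re : (fun y => ((h y).re : ℂ)) = h := funext fun y => by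
    rcases eq_or_ne y x with rfl | hyx
    · simp [hhx]
    · exact Complex.ext rfl (by simpa using (Complex.lt_def.1 (hh_neg y hyx)).2.symm)
  refine ⟨fun y => (h y).re, by fun_prop, by simp [hhx],
    fun y hyx => by simpa using (Complex.lt_def.1 (hh_neg y hyx)).1, ?_⟩
  rw [hh_re]
  intro y
  by_cases hy : y ∈ U
  · rw [psiFun_of_mem hy]; exact hhΦ ⟨y, hy⟩
  · rw [psiFun_of_notMem hy]

variable [MeasurableSpace K]

/-- `Ψ` is represented by the push-forward of `P_x` at `x ∈ U` and by the Dirac mass off `U`. -/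
lemma isMarkovOperator_psiFun (hU : MeasurableSet U) (hM : IsMarkovOperator Φ) :
    IsMarkovOperator (psiFun U Φ) := by
  intro x
  by_cases hx : x ∈ U
  · obtain ⟨P, hP, hΦP⟩ := hM ⟨x, hx⟩
    refine ⟨P.map (↑), Measure.isProbabilityMeasure_map measurable_subtype_coe.aemeasurable,
      fun f hf hC => ?_⟩
    have hfU := (show BoundedMeasurable f from ⟨hf, hC⟩).comp_measurable
      (measurable_subtype_coe (p := (· ∈ U)))
    rw [psiFun_of_mem hx, hΦP _ hfU.1 hfU.2, (MeasurableEmbedding.subtype_coe hU).integral_map]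
  · exact ⟨Measure.dirac x, inferInstance, fun f hf _ => by
      rw [psiFun_of_notMem hx, integral_dirac' f x hf.stronglyMeasurable]⟩

variable [TopologicalSpace K]

lemma continuousOn_psiFun (hSF : HasStrongFeller Φ) {f : K → ℂ} (hf : BoundedMeasurable f) :
    ContinuousOn (psiFun U Φ f) U := by
  rw [continuousOn_iff_continuous_domRestrict]
  have hfU := hf.comp_measurable (measurable_subtype_coe (p := (· ∈ U)))
  convert hSF _ hfU.1 hfU.2 using 1
  funext u
  exact psiFun_of_mem u.2

lemma boundedMeasurable_psiFun [OpensMeasurableSpace K] (hU : IsOpen U)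
    (hM : IsMarkovOperator Φ) (hSF : HasStrongFeller Φ) {f : K → ℂ}
    (hf : BoundedMeasurable f) : BoundedMeasurable (psiFun U Φ f) := by
  obtain ⟨C, hC⟩ := hf.2
  have hfU := hf.comp_measurable (measurable_subtype_coe (p := (· ∈ U)))
  refine ⟨?_, C, (isMarkovOperator_psiFun hU.measurableSet hM).norm_apply_le hf hC⟩
  classical
  exact Measurable.dite (hSF _ hfU.1 hfU.2).measurable
    (hf.1.comp measurable_subtype_coe) hU.measurableSet

lemma continuous_of_tendstoUniformly_iterate_psiFun [CompactSpace K] [OpensMeasurableSpace K]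
    (hU : IsOpen U) (hM : IsMarkovOperator Φ) (hSF : HasStrongFeller Φ) (hA : CondA U Φ)
    {g : K → ℝ} (hg : Continuous g)
    (hgΨ : (fun y => (g y : ℂ)) ≤ psiFun U Φ fun y => (g y : ℂ)) {p : K → ℂ}
    (hp : TendstoUniformly (fun n => (psiFun U Φ)^[n] fun y => (g y : ℂ)) p atTop) :
    Continuous p := by
  have hT := isMarkovOperator_psiFun hU.measurableSet hM
  have hTb := fun f => boundedMeasurable_psiFun (f := f) hU hM hSF
  have hgb : BoundedMeasurable fun y => (g y : ℂ) :=
    (Complex.continuous_ofReal.comp hg).boundedMeasurable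
  refine continuous_iff_continuousAt.2 fun x => ?_
  by_cases hx : x ∈ U
  · refine (hp.tendstoUniformlyOn.continuousOn (frequently_atTop.2 fun n =>
      ⟨n + 1, n.le_succ, ?_⟩)).continuousAt (hU.mem_nhds hx)
    rw [Function.iterate_succ_apply']
    exact continuousOn_psiFun hSF (hgb.iterate hTb n)
  · obtain ⟨b, hb, hbx, hb_neg, hbΨ⟩ := hA.exists_barrier hx
    have hpx : p x = g x := tendsto_nhds_unique (hp.tendsto_at x)
      (by simp only [iterate_psiFun_of_notMem hx, tendsto_const_nhds])
    exact hT.continuousAt_of_tendsto_iterate hTb hg hgΨ hp.tendsto_at hpx hb hbx hb_neg hbΨ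

end Psi

theorem stmt14_general {K : Type*} [MetricSpace K] [CompactSpace K]
    [MeasurableSpace K] [BorelSpace K]
    (U : Set K) (hUopen : IsOpen U)
    (Φ : (↥U → ℂ) → (↥U → ℂ))
    (hM : IsMarkovOperator Φ) (hSF : HasStrongFeller Φ)
    (hA : CondA U Φ) (hB : CondB U Φ)
    (hz : ∃ z₀ ∈ U, ∀ (h : C(K, ℂ)) (p : K → ℂ), psiFun U Φ ⇑h = ⇑h →
      TendstoUniformly
        (fun n x => (psiFun U Φ)^[n] (fun y => ((‖h y‖ ^ 2 : ℝ) : ℂ)) x)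
        p atTop →
      p z₀ - ((‖h z₀‖ ^ 2 : ℝ) : ℂ) = 0) :
    ∀ (h : C(K, ℂ)) (p : K → ℂ), psiFun U Φ ⇑h = ⇑h →
      TendstoUniformly
        (fun n x => (psiFun U Φ)^[n] (fun y => ((‖h y‖ ^ 2 : ℝ) : ℂ)) x)
        p atTop →
      ∀ x : K, p x = ((‖h x‖ ^ 2 : ℝ) : ℂ) := by
  obtain ⟨z₀, hz₀U, hz₀⟩ := hz
  intro h p hfix hp x
  have hT := isMarkovOperator_psiFun hUopen.measurableSet hM
  have hTb := fun f => boundedMeasurable_psiFun (f := f) hUopen hM hSF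
  set f₀ : K → ℂ := fun y => ((‖h y‖ ^ 2 : ℝ) : ℂ)
  have hf₀ : BoundedMeasurable f₀ := (by fun_prop : Continuous f₀).boundedMeasurable
  have hf₀Ψ : f₀ ≤ psiFun U Φ f₀ := fun y => by
    simpa only [congrFun hfix y] using hT.sq_norm_le_map_sq_norm h.continuous.boundedMeasurable y
  have hp_cont : Continuous p :=
    continuous_of_tendstoUniformly_iterate_psiFun hUopen hM hSF hA (by fun_prop) hf₀Ψ hp
  have hΨp := hT.map_eq_of_tendstoUniformly_iterate hTb hf₀ hp_cont.boundedMeasurable hp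
  have hf₀p : f₀ ≤ p := hT.le_of_tendsto_iterate hTb hf₀ hf₀Ψ hp.tendsto_at
  have hpz₀ : f₀ z₀ - p z₀ = 0 := by rw [← neg_sub, hz₀ h p hfix hp, neg_zero]
  let G : C(K, ℂ) := ⟨f₀ - p, by fun_prop⟩
  have hG_sub : ∀ u : ↥U, G u.1 ≤ Φ (fun v : ↥U => G v.1) u := fun u => by
    rw [← psiFun_of_mem (Φ := Φ) (f := G) u.2, ContinuousMap.coe_mk,
      hT.map_sub hf₀ hp_cont.boundedMeasurable, hΨp]
    exact sub_le_sub_right (hf₀Ψ u) _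
  have hG : G x = G z₀ := hB G (fun y => sub_eq_zero.2 (Complex.le_def.1 (hf₀p y)).2) hG_sub
    ⟨z₀, hz₀U, fun y => by simpa [G, hpz₀] using hf₀p y⟩ x z₀
  exact (sub_eq_zero.1 (hG.trans hpz₀)).symm

/-- If there is a point `z₀ ∈ U` at which `π(|h|²) − |h|²`
vanishes for every `h` fixed by `Ψ`, then `π(|h|²) = |h|²` identically on
`K` for every such `h`. -/
theorem stmt14 {K : Type*} [MetricSpace K] [CompactSpace K]
    [MeasurableSpace K] [BorelSpace K]
    (U : Set K) (hUopen : IsOpen U) (hUdense : Dense U)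
    (hbd : ∃ a b : K, a ∈ Uᶜ ∧ b ∈ Uᶜ ∧ a ≠ b)
    (Φ : (↥U → ℂ) → (↥U → ℂ))
    (hM : IsMarkovOperator Φ) (hSF : HasStrongFeller Φ)
    (hA : CondA U Φ) (hB : CondB U Φ)
    (hz : ∃ z₀ ∈ U, ∀ (h : C(K, ℂ)) (p : K → ℂ), psiFun U Φ ⇑h = ⇑h →
      TendstoUniformly
        (fun n x => (psiFun U Φ)^[n] (fun y => ((‖h y‖ ^ 2 : ℝ) : ℂ)) x)
        p atTop →
      p z₀ - ((‖h z₀‖ ^ 2 : ℝ) : ℂ) = 0) :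
    ∀ (h : C(K, ℂ)) (p : K → ℂ), psiFun U Φ ⇑h = ⇑h →
      TendstoUniformly
        (fun n x => (psiFun U Φ)^[n] (fun y => ((‖h y‖ ^ 2 : ℝ) : ℂ)) x)
        p atTop →
      ∀ x : K, p x = ((‖h x‖ ^ 2 : ℝ) : ℂ) :=
  stmt14_general U hUopen Φ hM hSF hA hB hz
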